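/- arXiv:math/0601776 — 5 statements merged into one kernel-verified Lean document; each statement's English description precedes it below -/
import Mathlib

section
/- Let p < q be real numbers and let G = {w ∈ ℍ : |w − (p+q)/2| = (q−p)/2} be the hyperbolic geodesic of the upper half-plane with endpoints p and q (a Euclidean semicircle). Then for every z ∈ ℍ, the hyperbolic distance d from z to G (the infimum of the hyperbolic distances from z to points of G) satisfies cosh d = |z − p|·|z − q| / ((q − p)·Im z). -/
open Complex

/-!
Write `z = c + a + i b` and `w = c + u + i v` with `u² + v² = r²`, where `c = (p + q)/2` and
`r = (q − p)/2`. The hyperbolic distance formula gives `cosh d(z, w) = (S − 2au) / (2bv)` with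
`S = |z − c|² + r²`, and `t = |z − p|·|z − q|` satisfies `t² + (2ar)² = S²`. Cauchy–Schwarz
`2ar·u + t·v ≤ S·r` then says `cosh d(z, w) ≥ t / (2rb)`, with equality at the point
`(u, v) = (r/S)(2ar, t)` of the semicircle.
-/

theorem Metric.infDist_eq_dist_of_forall_dist_le {α : Type*} [PseudoMetricSpace α]
    {x y : α} {s : Set α} (hy : y ∈ s) (h : ∀ w ∈ s, dist x y ≤ dist x w) :
    Metric.infDist x s = dist x y := by
  refine le_antisymm (Metric.infDist_le_dist_of_mem hy) (not_lt.1 fun hlt => ?_)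
  obtain ⟨w, hw, hwlt⟩ := (Metric.infDist_lt_iff ⟨y, hy⟩).1 hlt
  exact (h w hw).not_gt hwlt

theorem mul_add_mul_le_mul_of_sq_add_sq_eq {x y u v s r : ℝ} (hxy : x ^ 2 + y ^ 2 = s ^ 2)
    (huv : u ^ 2 + v ^ 2 = r ^ 2) (hs : 0 ≤ s) (hr : 0 ≤ r) : x * u + y * v ≤ s * r := by
  have hsq : (x * u + y * v) ^ 2 ≤ (s * r) ^ 2 := by
    nlinarith [sq_nonneg (x * v - y * u)]
  exact (abs_le_of_sq_le_sq' hsq (by positivity)).2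

theorem Complex.sq_norm_sub_ofReal (z : ℂ) (c : ℝ) :
    ‖z - c‖ ^ 2 = (z.re - c) ^ 2 + z.im ^ 2 := by
  rw [Complex.sq_norm, Complex.normSq_apply]
  simp only [sub_re, sub_im, ofReal_re, ofReal_im, sub_zero]
  ring

theorem Complex.sq_add_sq_norm_sub_mul_norm_sub (z : ℂ) (c r : ℝ) :
    (2 * (z.re - c) * r) ^ 2 + (‖z - ↑(c - r)‖ * ‖z - ↑(c + r)‖) ^ 2 =
      (‖z - c‖ ^ 2 + r ^ 2) ^ 2 := by
  rw [mul_pow ‖z - ↑(c - r)‖, sq_norm_sub_ofReal, sq_norm_sub_ofReal, sq_norm_sub_ofReal]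
  ring

namespace UpperHalfPlane

theorem cosh_dist_of_norm_sub_eq (z w : ℍ) {c r : ℝ} (hw : ‖(w : ℂ) - c‖ = r) :
    Real.cosh (dist z w) =
      (‖(z : ℂ) - c‖ ^ 2 + r ^ 2 - 2 * (z.re - c) * (w.re - c)) / (2 * z.im * w.im) := by
  have hden : 2 * z.im * w.im ≠ 0 := by have := z.im_pos; have := w.im_pos; positivity
  rw [cosh_dist, Complex.dist_eq, ← hw, Complex.sq_norm_sub_ofReal, Complex.sq_norm_sub_ofReal,
    Complex.sq_norm, Complex.normSq_apply]
  field_simp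
  simp only [sub_re, sub_im, coe_re, coe_im]
  ring

variable (z : ℍ) {c r : ℝ}

theorem div_le_cosh_dist_of_norm_sub_eq (hr : 0 < r) {w : ℍ} (hw : ‖(w : ℂ) - c‖ = r) :
    ‖(z : ℂ) - ↑(c - r)‖ * ‖(z : ℂ) - ↑(c + r)‖ / (2 * r * z.im) ≤ Real.cosh (dist z w) := by
  have hz := z.im_pos
  have hw' := w.im_pos
  have huv : (w.re - c) ^ 2 + w.im ^ 2 = r ^ 2 := by rw [← hw, Complex.sq_norm_sub_ofReal]; rfl
  have hcs := mul_add_mul_le_mul_of_sq_add_sq_eq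
    (Complex.sq_add_sq_norm_sub_mul_norm_sub z c r) huv (by positivity) hr.le
  rw [cosh_dist_of_norm_sub_eq z w hw, div_le_div_iff₀ (by positivity) (by positivity)]
  rw [coe_re] at hcs
  nlinarith [mul_le_mul_of_nonneg_left hcs hz.le]

theorem norm_sub_ofReal_pos (x : ℝ) : 0 < ‖(z : ℂ) - x‖ :=
  z.im_pos.trans_le <| (le_abs_self _).trans <| by simpa using Complex.abs_im_le_norm ((z : ℂ) - x)

theorem exists_norm_sub_eq_cosh_dist_eq (hr : 0 < r) :
    ∃ w : ℍ, ‖(w : ℂ) - c‖ = r ∧ Real.cosh (dist z w) =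
      ‖(z : ℂ) - ↑(c - r)‖ * ‖(z : ℂ) - ↑(c + r)‖ / (2 * r * z.im) := by
  set a := z.re - c
  set t := ‖(z : ℂ) - ↑(c - r)‖ * ‖(z : ℂ) - ↑(c + r)‖
  set S := ‖(z : ℂ) - c‖ ^ 2 + r ^ 2
  have hS : 0 < S := by positivity
  have ht : 0 < t := mul_pos (z.norm_sub_ofReal_pos _) (z.norm_sub_ofReal_pos _)
  have hid : (2 * a * r) ^ 2 + t ^ 2 = S ^ 2 := Complex.sq_add_sq_norm_sub_mul_norm_sub z c r
  let w : ℍ := ⟨⟨c + r * (2 * a * r) / S, r * t / S⟩, by dsimp only; positivity⟩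
  have hwre : w.re - c = r * (2 * a * r) / S := add_sub_cancel_left _ _
  have hwim : w.im = r * t / S := rfl
  have hw : ‖(w : ℂ) - c‖ = r := by
    refine (pow_left_inj₀ (norm_nonneg _) hr.le two_ne_zero).1 ?_
    rw [Complex.sq_norm_sub_ofReal, coe_re, hwre, coe_im, hwim]
    field_simp
    linear_combination hid
  refine ⟨w, hw, ?_⟩
  rw [cosh_dist_of_norm_sub_eq z w hw, hwre, hwim]
  field_simp
  linear_combination -hid

theorem cosh_infDist_semicircle (hr : 0 < r) :
    Real.cosh (Metric.infDist z {w : ℍ | ‖(w : ℂ) - c‖ = r}) =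
      ‖(z : ℂ) - ↑(c - r)‖ * ‖(z : ℂ) - ↑(c + r)‖ / (2 * r * z.im) := by
  obtain ⟨w₀, hw₀, hcosh⟩ := exists_norm_sub_eq_cosh_dist_eq z hr
  have hmin (w : ℍ) (hw : ‖(w : ℂ) - c‖ = r) : dist z w₀ ≤ dist z w :=
    (Real.cosh_strictMonoOn.le_iff_le dist_nonneg dist_nonneg).1 <|
      hcosh ▸ div_le_cosh_dist_of_norm_sub_eq z hr hw
  rw [Metric.infDist_eq_dist_of_forall_dist_le (s := {w : ℍ | ‖(w : ℂ) - c‖ = r}) hw₀ hmin,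
    hcosh]

end UpperHalfPlane

/-- For the hyperbolic geodesic `G = {w ∈ ℍ : |w − (p+q)/2| = (q−p)/2}` of the upper
half-plane with endpoints `p < q`, the hyperbolic distance `d` from `z ∈ ℍ` to `G`
satisfies `cosh d = |z − p|·|z − q| / ((q − p)·Im z)`. -/
theorem stmt1 (p q : ℝ) (hpq : p < q) (z : UpperHalfPlane) :
    Real.cosh (Metric.infDist z
        {w : UpperHalfPlane | ‖(w : ℂ) - (((p : ℂ) + q) / 2)‖ = (q - p) / 2}) =
      ‖(z : ℂ) - p‖ * ‖(z : ℂ) - q‖ / ((q - p) * (z : ℂ).im) := by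
  have hcenter : ((p : ℂ) + q) / 2 = ↑((p + q) / 2) := by push_cast; rfl
  have hp : p = (p + q) / 2 - (q - p) / 2 := by ring
  have hq : q = (p + q) / 2 + (q - p) / 2 := by ring
  have hr : 0 < (q - p) / 2 := by linarith
  rw [hcenter, z.cosh_infDist_semicircle hr, ← hp, ← hq, UpperHalfPlane.coe_im]
  congr 1
  ring
end

section
/- Let α, β ∈ ℂ with |α|² − |β|² = 1 and let γ(z) = (αz + β)/(conj(β)·z + conj(α)). Then for every z ∈ ℂ with |z| < 1 and every b ∈ ℂ with |b| = 1, the Poisson kernel satisfies the cocycle identity P(γ(z), γ(b)) = P(z, b) · P(γ(0), γ(b)). -/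
/-!
Write `D(w) = conj β · w + conj α` for the denominator of `γ(w) = (αw + β)/D(w)`. Since
`|α|² − |β|² = 1`, one has `γz − γb = (z − b)/(D(z) D(b))` and `1 − |γz|² = (1 − |z|²)/|D(z)|²`,
so `P(γz, γb) = P(z, b) · |D(b)|²`. Taking `z = 0`, where `P(0, b) = 1` for `|b| = 1`,
identifies the factor `|D(b)|²` as `P(γ0, γb)`.
-/

open Complex

/-- The Poisson kernel of the unit disc, `P(z,b) = (1 − |z|²)/|z − b|²`. -/
noncomputable def poissonKernelUnitDisc (z b : ℂ) : ℝ :=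
  (1 - ‖z‖ ^ 2) / ‖z - b‖ ^ 2

open ComplexConjugate

namespace PoissonKernelMoebius

variable {α β : ℂ}

lemma sq_norm_denom_sub_sq_norm_num (α β w : ℂ) :
    ‖conj β * w + conj α‖ ^ 2 - ‖α * w + β‖ ^ 2 = (‖α‖ ^ 2 - ‖β‖ ^ 2) * (1 - ‖w‖ ^ 2) := by
  simp only [Complex.sq_norm, normSq_apply, add_re, add_im, mul_re, mul_im, conj_re, conj_im]
  ring

lemma denom_ne_zero (h : ‖α‖ ^ 2 - ‖β‖ ^ 2 = 1) {w : ℂ} (hw : ‖w‖ ≤ 1) :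
    conj β * w + conj α ≠ 0 := by
  intro h0
  have hα : ‖α‖ = ‖β‖ * ‖w‖ := by
    rw [← Complex.norm_conj α, eq_neg_of_add_eq_zero_right h0, norm_neg, norm_mul,
      Complex.norm_conj]
  have : ‖α‖ ^ 2 ≤ ‖β‖ ^ 2 := by
    rw [hα, mul_pow]
    exact mul_le_of_le_one_right (by positivity) (pow_le_one₀ (norm_nonneg w) hw)
  linarith

lemma moebius_sub_moebius (h : ‖α‖ ^ 2 - ‖β‖ ^ 2 = 1) {w v : ℂ}
    (hw : conj β * w + conj α ≠ 0) (hv : conj β * v + conj α ≠ 0) :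
    (α * w + β) / (conj β * w + conj α) - (α * v + β) / (conj β * v + conj α) =
      (w - v) / ((conj β * w + conj α) * (conj β * v + conj α)) := by
  have hdet : α * conj α - β * conj β = 1 := by
    rw [mul_conj, mul_conj, ← ofReal_sub, ← Complex.sq_norm, ← Complex.sq_norm, h, ofReal_one]
  rw [div_sub_div _ _ hw hv]
  congr 1
  linear_combination (w - v) * hdet

lemma one_sub_sq_norm_moebius (h : ‖α‖ ^ 2 - ‖β‖ ^ 2 = 1) {w : ℂ}
    (hw : conj β * w + conj α ≠ 0) :
    1 - ‖(α * w + β) / (conj β * w + conj α)‖ ^ 2 =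
      (1 - ‖w‖ ^ 2) / ‖conj β * w + conj α‖ ^ 2 := by
  have hD : ‖conj β * w + conj α‖ ^ 2 ≠ 0 := by positivity
  rw [norm_div, div_pow, eq_div_iff hD, sub_mul, one_mul, div_mul_cancel₀ _ hD]
  linear_combination sq_norm_denom_sub_sq_norm_num α β w + (1 - ‖w‖ ^ 2) * h

-- No `z ≠ b` is needed: then both sides are `0` through the junk value `x / 0 = 0`.
lemma poissonKernel_moebius (h : ‖α‖ ^ 2 - ‖β‖ ^ 2 = 1) {z b : ℂ}
    (hz : conj β * z + conj α ≠ 0) (hb : conj β * b + conj α ≠ 0) :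
    poissonKernelUnitDisc ((α * z + β) / (conj β * z + conj α))
        ((α * b + β) / (conj β * b + conj α)) =
      poissonKernelUnitDisc z b * ‖conj β * b + conj α‖ ^ 2 := by
  have hDz : ‖conj β * z + conj α‖ ≠ 0 := norm_ne_zero_iff.mpr hz
  have hDb : ‖conj β * b + conj α‖ ≠ 0 := norm_ne_zero_iff.mpr hb
  rw [poissonKernelUnitDisc, poissonKernelUnitDisc, one_sub_sq_norm_moebius h hz,
    moebius_sub_moebius h hz hb, norm_div, norm_mul]
  field_simp

lemma poissonKernel_zero_left {b : ℂ} (hb : ‖b‖ = 1) : poissonKernelUnitDisc 0 b = 1 := by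
  simp [poissonKernelUnitDisc, hb]

end PoissonKernelMoebius

open PoissonKernelMoebius

/-- The cocycle identity `P(γz, γb) = P(z,b) · P(γ·0, γ·b)` for the Poisson kernel under
the Möbius action of `SU(1,1)` on the unit disc,
`γ(z) = (αz + β)/(conj β · z + conj α)`. -/
theorem stmt4 (α β : ℂ) (h : ‖α‖ ^ 2 - ‖β‖ ^ 2 = 1)
    (z b : ℂ) (hz : ‖z‖ < 1) (hb : ‖b‖ = 1) :
    poissonKernelUnitDisc ((α * z + β) / ((starRingEnd ℂ) β * z + (starRingEnd ℂ) α))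
        ((α * b + β) / ((starRingEnd ℂ) β * b + (starRingEnd ℂ) α)) =
      poissonKernelUnitDisc z b *
        poissonKernelUnitDisc ((α * 0 + β) / ((starRingEnd ℂ) β * 0 + (starRingEnd ℂ) α))
          ((α * b + β) / ((starRingEnd ℂ) β * b + (starRingEnd ℂ) α)) := by
  have hDb := denom_ne_zero h hb.le
  rw [poissonKernel_moebius h (denom_ne_zero h hz.le) hDb,
    poissonKernel_moebius h (denom_ne_zero h (by simp)) hDb, poissonKernel_zero_left hb, one_mul]
end

section
/- Let α, β ∈ ℂ with |α|² − |β|² = 1 and let γ(z) = (αz + β)/(conj(β)·z + conj(α)). Then for all b, b′ ∈ ℂ with |b| = |b′| = 1 one has |γ(b) − γ(b′)|² · P(γ(0), γ(b)) · P(γ(0), γ(b′)) = |b − b′|². -/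
open Complex

/-
Write `γz = (αz + β)/d(z)` with `d(z) = conj β·z + conj α`. Since `|α|² − |β|² = 1`, the
difference of two images factors as `γz − γw = (z − w)/(d(z)·d(w))`. At `z = 0`, where
`d(0) = conj α` and `1 − |γ0|² = 1/|α|²`, this gives `P(γ0, γb) = |d(b)|²` for `|b| = 1`,
so the two Poisson kernels cancel exactly the denominators of `|γb − γb′|²`.
-/

/-- The Poisson kernel of the unit disc, `P(z,b) = (1 − |z|²)/|z − b|²`. -/
noncomputable def poissonKernelDisc (z b : ℂ) : ℝ :=
  (1 - ‖z‖ ^ 2) / ‖z - b‖ ^ 2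

namespace SU11

open ComplexConjugate

noncomputable def denom (α β z : ℂ) : ℂ :=
  conj β * z + conj α

noncomputable def act (α β z : ℂ) : ℂ :=
  (α * z + β) / denom α β z

variable {α β : ℂ}

theorem mul_conj_sub_mul_conj (h : ‖α‖ ^ 2 - ‖β‖ ^ 2 = 1) :
    α * conj α - β * conj β = 1 := by
  rw [mul_conj, mul_conj, normSq_eq_norm_sq, normSq_eq_norm_sq]
  exact_mod_cast h

theorem norm_pos_left (h : ‖α‖ ^ 2 - ‖β‖ ^ 2 = 1) : 0 < ‖α‖ := by
  nlinarith [norm_nonneg α, norm_nonneg β]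

theorem denom_ne_zero (h : ‖α‖ ^ 2 - ‖β‖ ^ 2 = 1) {z : ℂ} (hz : ‖z‖ ≤ 1) :
    denom α β z ≠ 0 := by
  have hβα : ‖β‖ < ‖α‖ := by
    nlinarith [norm_nonneg α, norm_nonneg β]
  have : ‖conj β * z‖ < ‖conj α‖ := by
    rw [norm_mul, norm_conj, norm_conj]
    nlinarith [norm_nonneg β, norm_nonneg z]
  intro h0
  rw [denom, add_eq_zero_iff_eq_neg] at h0
  rw [h0, norm_neg] at this
  exact lt_irrefl _ this

theorem act_sub_act (h : ‖α‖ ^ 2 - ‖β‖ ^ 2 = 1) {z w : ℂ}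
    (hz : denom α β z ≠ 0) (hw : denom α β w ≠ 0) :
    act α β z - act α β w = (z - w) / (denom α β z * denom α β w) := by
  rw [act, act, div_sub_div _ _ hz hw, denom, denom]
  congr 1
  linear_combination (z - w) * mul_conj_sub_mul_conj h

theorem one_sub_norm_act_zero_sq (h : ‖α‖ ^ 2 - ‖β‖ ^ 2 = 1) :
    1 - ‖act α β 0‖ ^ 2 = 1 / ‖α‖ ^ 2 := by
  have hα := (norm_pos_left h).ne'
  rw [act, denom, norm_div]
  simp only [mul_zero, zero_add, norm_conj]
  field_simp
  linarith

theorem poissonKernelDisc_act_zero (h : ‖α‖ ^ 2 - ‖β‖ ^ 2 = 1) {b : ℂ} (hb : ‖b‖ = 1) :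
    poissonKernelDisc (act α β 0) (act α β b) = ‖denom α β b‖ ^ 2 := by
  have hα := (norm_pos_left h).ne'
  have h0 : denom α β 0 = conj α := by simp [denom]
  rw [poissonKernelDisc, one_sub_norm_act_zero_sq h,
    act_sub_act h (denom_ne_zero h (by simp)) (denom_ne_zero h hb.le), h0]
  simp only [norm_div, norm_mul, norm_conj, zero_sub, norm_neg, hb]
  have hd := norm_ne_zero_iff.mpr (denom_ne_zero h hb.le)
  field_simp

end SU11

/-- For `γ ∈ SU(1,1)` acting by `γ(z) = (αz + β)/(conj β·z + conj α)`, and boundary points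
`b, b′`, one has `|γb − γb′|² · P(γ0, γb) · P(γ0, γb′) = |b − b′|²`. -/
theorem stmt5 (α β : ℂ) (h : ‖α‖ ^ 2 - ‖β‖ ^ 2 = 1)
    (b b' : ℂ) (hb : ‖b‖ = 1) (hb' : ‖b'‖ = 1) :
    ‖(α * b + β) / ((starRingEnd ℂ) β * b + (starRingEnd ℂ) α) -
          (α * b' + β) / ((starRingEnd ℂ) β * b' + (starRingEnd ℂ) α)‖ ^ 2 *
        poissonKernelDisc ((α * 0 + β) / ((starRingEnd ℂ) β * 0 + (starRingEnd ℂ) α))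
          ((α * b + β) / ((starRingEnd ℂ) β * b + (starRingEnd ℂ) α)) *
        poissonKernelDisc ((α * 0 + β) / ((starRingEnd ℂ) β * 0 + (starRingEnd ℂ) α))
          ((α * b' + β) / ((starRingEnd ℂ) β * b' + (starRingEnd ℂ) α)) =
      ‖b - b'‖ ^ 2 := by
  open SU11 in
  change ‖act α β b - act α β b'‖ ^ 2 * poissonKernelDisc (act α β 0) (act α β b) *
    poissonKernelDisc (act α β 0) (act α β b') = ‖b - b'‖ ^ 2
  have hd := SU11.denom_ne_zero h hb.le
  have hd' := SU11.denom_ne_zero h hb'.le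
  rw [SU11.act_sub_act h hd hd', SU11.poissonKernelDisc_act_zero h hb,
    SU11.poissonKernelDisc_act_zero h hb', norm_div, norm_mul]
  have hd_norm := norm_ne_zero_iff.mpr hd
  have hd'_norm := norm_ne_zero_iff.mpr hd'
  field_simp
end

section
/- For every r ∈ ℝ, the integral ∫_ℝ (1 + x²)^{−(1/2 + ir)} · |x|^{−(1/2 − ir)} dx converges absolutely and equals Γ(1/4 + ir/2)² / Γ(1/2 + ir). -/
/-!
The integrand is even, so the integral is twice the one over `(0, ∞)`. With `a = 1/4 + ir/2`,
the substitution `t = x²` turns that into `½ ∫₀^∞ t^(a-1) (1 + t)^(-2a) dt`, and `u = t / (1 + t)`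
turns this into the beta integral `B(a, a) = Γ(a)² / Γ(2a)`.
-/

open Complex MeasureTheory Set

section EvenFunctions

variable {E : Type*} [NormedAddCommGroup E] {f : ℝ → E}

lemma comp_abs_ae_eq_indicator_Ioi_add_comp_neg :
    (fun x : ℝ => f |x|) =ᵐ[volume]
      fun x => (Ioi 0).indicator f x + (Ioi 0).indicator f (-x) := by
  filter_upwards [Measure.ae_ne volume (0 : ℝ)] with x hx
  rcases hx.lt_or_gt with hneg | hpos
  · simp [abs_of_neg hneg, hneg, hneg.not_gt]
  · simp [abs_of_pos hpos, hpos, hpos.not_gt]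

lemma integrable_comp_abs_of_integrableOn_Ioi (hf : IntegrableOn f (Ioi 0)) :
    Integrable fun x : ℝ => f |x| := by
  have hind : Integrable ((Ioi 0).indicator f) := (integrable_indicator_iff measurableSet_Ioi).2 hf
  exact (hind.add hind.comp_neg).congr comp_abs_ae_eq_indicator_Ioi_add_comp_neg.symm

lemma integral_comp_abs_of_integrableOn_Ioi [NormedSpace ℝ E] (hf : IntegrableOn f (Ioi 0)) :
    ∫ x : ℝ, f |x| = (2 : ℝ) • ∫ x in Ioi 0, f x := by
  have hind : Integrable ((Ioi 0).indicator f) := (integrable_indicator_iff measurableSet_Ioi).2 hf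
  rw [integral_congr_ae comp_abs_ae_eq_indicator_Ioi_add_comp_neg,
    integral_add hind hind.comp_neg, integral_neg_eq_self, integral_indicator measurableSet_Ioi,
    two_smul]

end EvenFunctions

lemma image_div_one_add_Ioi : (fun t : ℝ => t / (1 + t)) '' Ioi 0 = Ioo 0 1 := by
  ext u
  simp only [mem_image, mem_Ioi, mem_Ioo]
  constructor
  · rintro ⟨t, ht, rfl⟩
    exact ⟨by positivity, (div_lt_one (by positivity)).2 (by linarith)⟩
  · rintro ⟨hu0, hu1⟩
    refine ⟨u / (1 - u), div_pos hu0 (by linarith), ?_⟩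
    field_simp [(by linarith : (1 : ℝ) - u ≠ 0)]
    ring

lemma injOn_div_one_add_Ioi : InjOn (fun t : ℝ => t / (1 + t)) (Ioi 0) := by
  intro t ht t' ht' h
  simp only [mem_Ioi] at ht ht'
  rw [div_eq_div_iff (by positivity) (by positivity)] at h
  linarith

lemma hasDerivAt_div_one_add {t : ℝ} (ht : 1 + t ≠ 0) :
    HasDerivAt (fun t : ℝ => t / (1 + t)) ((1 + t) ^ 2)⁻¹ t := by
  refine ((hasDerivAt_id' t).div ((hasDerivAt_id' t).const_add 1) ht).congr_deriv ?_
  field_simp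
  ring

lemma abs_deriv_smul_betaIntegrand_comp_div_one_add (a b : ℂ) {t : ℝ} (ht : 0 < t) :
    |((1 + t) ^ 2)⁻¹| •
        (((t / (1 + t) : ℝ) : ℂ) ^ (a - 1) * (1 - ((t / (1 + t) : ℝ) : ℂ)) ^ (b - 1))
      = (t : ℂ) ^ (a - 1) * (1 + (t : ℂ)) ^ (-(a + b)) := by
  have h1t : (0 : ℝ) < 1 + t := by linarith
  set w : ℂ := ((1 + t : ℝ) : ℂ) with hw
  have hw0 : w ≠ 0 := ofReal_ne_zero.2 h1t.ne'
  have hsub : 1 - ((t / (1 + t) : ℝ) : ℂ) = ((1 + t : ℝ)⁻¹ : ℝ) := by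
    have : (1 : ℂ) + t ≠ 0 := by exact_mod_cast h1t.ne'
    push_cast; field_simp; ring
  have hw' : (1 : ℂ) + t = w := by rw [hw]; push_cast; rfl
  rw [abs_of_pos (by positivity), hsub, ofReal_div, div_cpow_ofReal_nonneg ht.le h1t.le,
    ofReal_inv, inv_cpow_ofReal_nonneg h1t.le, ← hw, hw', real_smul, ofReal_inv, ofReal_pow, ← hw,
    cpow_sub _ _ hw0, cpow_sub _ _ hw0, cpow_neg, cpow_add _ _ hw0, cpow_one]
  have hwa : w ^ a ≠ 0 := cpow_ne_zero_iff.2 (Or.inl hw0)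
  have hwb : w ^ b ≠ 0 := cpow_ne_zero_iff.2 (Or.inl hw0)
  field_simp

lemma betaIntegral_eq_integral_Ioo (a b : ℂ) :
    betaIntegral a b = ∫ u in Ioo (0 : ℝ) 1, (u : ℂ) ^ (a - 1) * (1 - (u : ℂ)) ^ (b - 1) := by
  rw [betaIntegral, intervalIntegral.integral_of_le zero_le_one, integral_Ioc_eq_integral_Ioo]

lemma integrableOn_Ioo_betaIntegrand {a b : ℂ} (ha : 0 < a.re) (hb : 0 < b.re) :
    IntegrableOn (fun u : ℝ => (u : ℂ) ^ (a - 1) * (1 - (u : ℂ)) ^ (b - 1)) (Ioo 0 1) :=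
  ((intervalIntegrable_iff_integrableOn_Ioc_of_le zero_le_one).1
    (betaIntegral_convergent ha hb)).mono_set Ioo_subset_Ioc_self

lemma hasDerivWithinAt_div_one_add_Ioi :
    ∀ t ∈ Ioi (0 : ℝ), HasDerivWithinAt (fun t : ℝ => t / (1 + t)) ((1 + t) ^ 2)⁻¹ (Ioi 0) t :=
  fun t ht => (hasDerivAt_div_one_add (by linarith [mem_Ioi.1 ht])).hasDerivWithinAt

lemma integrableOn_Ioi_cpow_mul_one_add_cpow_neg {a b : ℂ} (ha : 0 < a.re) (hb : 0 < b.re) :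
    IntegrableOn (fun t : ℝ => (t : ℂ) ^ (a - 1) * (1 + (t : ℂ)) ^ (-(a + b))) (Ioi 0) := by
  have h := integrableOn_Ioo_betaIntegrand ha hb
  rw [← image_div_one_add_Ioi, integrableOn_image_iff_integrableOn_abs_deriv_smul measurableSet_Ioi
    hasDerivWithinAt_div_one_add_Ioi injOn_div_one_add_Ioi] at h
  exact h.congr_fun (fun t ht => abs_deriv_smul_betaIntegrand_comp_div_one_add a b ht)
    measurableSet_Ioi

lemma integral_Ioi_cpow_mul_one_add_cpow_neg (a b : ℂ) :
    ∫ t in Ioi (0 : ℝ), (t : ℂ) ^ (a - 1) * (1 + (t : ℂ)) ^ (-(a + b)) = betaIntegral a b := by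
  rw [betaIntegral_eq_integral_Ioo, ← image_div_one_add_Ioi,
    integral_image_eq_integral_abs_deriv_smul measurableSet_Ioi hasDerivWithinAt_div_one_add_Ioi
      injOn_div_one_add_Ioi]
  exact setIntegral_congr_fun measurableSet_Ioi
    fun t ht => (abs_deriv_smul_betaIntegrand_comp_div_one_add a b ht).symm

lemma rpow_smul_cpow_mul_one_add_cpow_neg_comp_rpow_two (a b : ℂ) {x : ℝ} (hx : 0 < x) :
    x ^ ((2 : ℝ) - 1) •
        (((x ^ (2 : ℝ) : ℝ) : ℂ) ^ (a - 1) * (1 + ((x ^ (2 : ℝ) : ℝ) : ℂ)) ^ (-(a + b)))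
      = (x : ℂ) ^ (2 * a - 1) * (1 + (x : ℂ) ^ 2) ^ (-(a + b)) := by
  have hx0 : (x : ℂ) ≠ 0 := ofReal_ne_zero.2 hx.ne'
  rw [← cpow_mul_ofReal_nonneg hx.le, Real.rpow_two, ofReal_pow, show (2 : ℝ) - 1 = 1 by norm_num,
    Real.rpow_one, real_smul, show 2 * a - 1 = ((2 : ℝ) : ℂ) * (a - 1) + 1 by push_cast; ring,
    cpow_add _ _ hx0, cpow_one]
  ring

lemma integrableOn_Ioi_cpow_mul_one_add_sq_cpow_neg {a b : ℂ} (ha : 0 < a.re) (hb : 0 < b.re) :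
    IntegrableOn (fun x : ℝ => (x : ℂ) ^ (2 * a - 1) * (1 + (x : ℂ) ^ 2) ^ (-(a + b))) (Ioi 0) := by
  have h := integrableOn_Ioi_cpow_mul_one_add_cpow_neg ha hb
  rw [← integrableOn_Ioi_comp_rpow_iff' _ two_ne_zero] at h
  exact h.congr_fun (fun x hx => rpow_smul_cpow_mul_one_add_cpow_neg_comp_rpow_two a b hx)
    measurableSet_Ioi

lemma integral_Ioi_cpow_mul_one_add_sq_cpow_neg (a b : ℂ) :
    ∫ x in Ioi (0 : ℝ), (x : ℂ) ^ (2 * a - 1) * (1 + (x : ℂ) ^ 2) ^ (-(a + b))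
      = betaIntegral a b / 2 := by
  set g : ℝ → ℂ := fun t => (t : ℂ) ^ (a - 1) * (1 + (t : ℂ)) ^ (-(a + b))
  calc _ = ∫ x in Ioi (0 : ℝ), x ^ ((2 : ℝ) - 1) • g (x ^ (2 : ℝ)) :=
        (setIntegral_congr_fun measurableSet_Ioi fun x hx =>
          rpow_smul_cpow_mul_one_add_cpow_neg_comp_rpow_two a b hx).symm
    _ = (2 : ℝ)⁻¹ • ∫ x in Ioi (0 : ℝ), ((2 : ℝ) * x ^ ((2 : ℝ) - 1)) • g (x ^ (2 : ℝ)) := by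
        simp_rw [mul_smul, integral_smul, smul_smul, inv_mul_cancel₀ (two_ne_zero (α := ℝ)),
          one_smul]
    _ = betaIntegral a b / 2 := by
        rw [integral_comp_rpow_Ioi_of_pos two_pos, integral_Ioi_cpow_mul_one_add_cpow_neg,
          real_smul, div_eq_inv_mul]
        push_cast
        ring

/-- For every `r ∈ ℝ`, `∫_ℝ (1 + x²)^{−(1/2 + ir)} |x|^{−(1/2 − ir)} dx` converges
absolutely and equals `Γ(1/4 + ir/2)² / Γ(1/2 + ir)`.  (The integrand is interpreted
as `0` at `x = 0`, which is automatic for the complex power of base `0`.) -/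
theorem stmt9 (r : ℝ) :
    Integrable (fun x : ℝ =>
      ((1 : ℂ) + (x : ℂ) ^ 2) ^ (-(1 / 2 + Complex.I * r)) *
        ((|x| : ℝ) : ℂ) ^ (-(1 / 2 - Complex.I * r))) ∧
    ∫ x : ℝ, ((1 : ℂ) + (x : ℂ) ^ 2) ^ (-(1 / 2 + Complex.I * r)) *
        ((|x| : ℝ) : ℂ) ^ (-(1 / 2 - Complex.I * r)) =
      Complex.Gamma (1 / 4 + Complex.I * r / 2) ^ 2 / Complex.Gamma (1 / 2 + Complex.I * r) := by
  set a : ℂ := 1 / 4 + Complex.I * r / 2 with ha_def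
  have ha : 0 < a.re := by norm_num [ha_def]
  set g : ℝ → ℂ := fun y => (y : ℂ) ^ (2 * a - 1) * (1 + (y : ℂ) ^ 2) ^ (-(a + a)) with hg
  have h_even : (fun x : ℝ => ((1 : ℂ) + (x : ℂ) ^ 2) ^ (-(1 / 2 + Complex.I * r)) *
      ((|x| : ℝ) : ℂ) ^ (-(1 / 2 - Complex.I * r))) = fun x => g |x| := by
    ext x
    have hsq : ((|x| : ℝ) : ℂ) ^ 2 = (x : ℂ) ^ 2 := by rw [← ofReal_pow, sq_abs, ofReal_pow]
    simp only [hg, hsq]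
    rw [mul_comm, ha_def]
    ring_nf
  have h_half := integrableOn_Ioi_cpow_mul_one_add_sq_cpow_neg ha ha
  rw [h_even, integral_comp_abs_of_integrableOn_Ioi h_half,
    integral_Ioi_cpow_mul_one_add_sq_cpow_neg, betaIntegral_eq_Gamma_mul_div a a ha ha]
  refine ⟨integrable_comp_abs_of_integrableOn_Ioi h_half, ?_⟩
  rw [real_smul, ha_def]
  push_cast
  ring_nf
end

section
/- Let m be an even natural number and let z ∈ ℂ with Im z > 0. Then z^{−m} · (−1/z)^{−m/2} = (−1)^{m/2} · z^{−m/2}, where (−1/z)^{−m/2} and z^{−m/2} use the principal branch (note −1/z again lies in the upper half-plane). Consequently the function z ↦ z^{−m/2} is invariant under the time-reversal operator f(z) ↦ z^{−m} f(−1/z) when m ≡ 0 (mod 4), and is anti-invariant (changes sign) when m ≡ 2 (mod 4). -/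
open Complex

/-- For `m` an even natural number and `z` in the upper half-plane,
`z^{−m} (−1/z)^{−m/2} = (−1)^{m/2} z^{−m/2}` (principal branch powers).  Consequently
`z ↦ z^{−m/2}` is invariant under the time-reversal operator `f(z) ↦ z^{−m} f(−1/z)`
when `m ≡ 0 (mod 4)` and anti-invariant when `m ≡ 2 (mod 4)`. -/
theorem stmt15 (m : ℕ) (hm : Even m) (z : ℂ) (hz : 0 < z.im) :
    z ^ (-(m : ℤ)) * (-1 / z) ^ (-((m : ℂ) / 2)) =
        (-1 : ℂ) ^ (m / 2) * z ^ (-((m : ℂ) / 2)) ∧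
    (m % 4 = 0 →
      z ^ (-(m : ℤ)) * (-1 / z) ^ (-((m : ℂ) / 2)) = z ^ (-((m : ℂ) / 2))) ∧
    (m % 4 = 2 →
      z ^ (-(m : ℤ)) * (-1 / z) ^ (-((m : ℂ) / 2)) = -(z ^ (-((m : ℂ) / 2)))) := by
  have hz0 : z ≠ 0 := by
    intro h; simp [h] at hz
  obtain ⟨k, hk⟩ := hm
  have hm2 : m = 2 * k := by omega
  have hk2 : m / 2 = k := by omega
  have hc : -((m : ℂ) / 2) = ((-(k : ℤ) : ℤ) : ℂ) := by
    push_cast [hm2]; ring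
  rw [hc, cpow_intCast, cpow_intCast]
  have hbase : (-1 / z : ℂ) = (-z)⁻¹ := by field_simp
  have hmain : z ^ (-(m : ℤ)) * (-1 / z) ^ (-(k : ℤ)) = (-1 : ℂ) ^ k * z ^ (-(k : ℤ)) := by
    have hz2 : z ^ (-(m : ℤ)) * z ^ (k : ℤ) = z ^ (-(k : ℤ)) := by
      rw [← zpow_add₀ hz0]; congr 1; omega
    rw [hbase, inv_zpow, ← zpow_neg, neg_neg, zpow_natCast, neg_pow,
      show z ^ k = z ^ (k : ℤ) from (zpow_natCast z k).symm,
      ← mul_assoc, mul_comm (z ^ (-(m:ℤ))) ((-1:ℂ)^k), mul_assoc, hz2]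
  rw [hk2, hmain]
  refine ⟨rfl, ?_, ?_⟩
  · intro h4
    have : Even k := Nat.even_iff.mpr (by omega)
    rw [this.neg_one_pow, one_mul]
  · intro h4
    have : Odd k := Nat.odd_iff.mpr (by omega)
    rw [this.neg_one_pow, neg_one_mul]
end
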